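/- arXiv:1105.0749 — 4 statements merged into one kernel-verified Lean document; each statement's English description precedes it below -/
import Mathlib

section
/- Let M_A, M_B, M_{B'}, g_A, g_B, h, c be real numbers with c ≠ 0, g_B ≠ 0, and M_B ≠ M_A, satisfying the energy conservation relation M_A g_A h + M_{B'} c² = M_B c² + M_B g_B h. Then the fractional frequency shift δν/ν := (M_{B'} − M_B)/(M_B − M_A) satisfies δν/ν = (g_B h/c²)·[ 1 + (M_A/(M_B − M_A))·((g_B − g_A)/g_B) ]. Consequently the anomalous redshift parameter α defined by δν/ν = (1 + α)·g_B h/c² equals α = (M_A/(M_B − M_A))·((g_B − g_A)/g_B). -/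
/- Both sides equal `(M_B g_B - M_A g_A) h / (c² (M_B - M_A))`: the left one by energy
conservation, the right one after clearing the denominators `g_B` and `M_B - M_A`. -/
theorem nordtvedt_frequency_shift_eq {K : Type*} [Field K] {MA MB MB' gA gB h c : K}
    (hc : c ≠ 0) (hgB : gB ≠ 0) (hM : MB ≠ MA)
    (hcons : MA * gA * h + MB' * c ^ 2 = MB * c ^ 2 + MB * gB * h) :
    (MB' - MB) / (MB - MA) =
      (gB * h / c ^ 2) * (1 + (MA / (MB - MA)) * ((gB - gA) / gB)) := by
  have hMM : MB - MA ≠ 0 := sub_ne_zero.mpr hM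
  field_simp
  linear_combination hcons

/-- Nordtvedt's gedanken experiment.  Energy conservation
`M_A g_A h + M_{B'} c² = M_B c² + M_B g_B h` implies the fractional frequency
shift `δν/ν = (M_{B'} − M_B)/(M_B − M_A)` equals
`(g_B h/c²)·[1 + (M_A/(M_B−M_A))·((g_B−g_A)/g_B)]`, and hence the anomalous
redshift parameter `α = (M_A/(M_B−M_A))·((g_B−g_A)/g_B)` satisfies
`δν/ν = (1+α)·g_B h/c²`. -/
theorem stmt_6 (MA MB MB' gA gB h c : ℝ) (hc : c ≠ 0) (hgB : gB ≠ 0)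
    (hM : MB ≠ MA)
    (hcons : MA * gA * h + MB' * c ^ 2 = MB * c ^ 2 + MB * gB * h) :
    (MB' - MB) / (MB - MA) =
      (gB * h / c ^ 2) * (1 + (MA / (MB - MA)) * ((gB - gA) / gB)) ∧
    ∀ α : ℝ, α = (MA / (MB - MA)) * ((gB - gA) / gB) →
      (MB' - MB) / (MB - MA) = (1 + α) * (gB * h / c ^ 2) := by
  have hshift := nordtvedt_frequency_shift_eq hc hgB hM hcons
  refine ⟨hshift, fun α hα => ?_⟩
  rw [hshift, hα, mul_comm]
end

section
/- Let m_i, m_g, g > 0, ĝ ∈ ℝ, T > 0, and define S(z_b, t_b; z_a, t_a) := (m_i/2)·(z_b − z_a)²/(t_b − t_a) − (m_g g/2)·(z_b + z_a)·(t_b − t_a) + (ĝ/24)·(t_b − t_a)³·(m_i ĝ − 2 m_g g) for t_a < t_b. Then for any z_A, z_B, z_C, z_D ∈ ℝ, the action difference along the two interferometer paths, ΔS := [S(z_C, T; z_A, 0) + S(z_D, 2T; z_C, T)] − [S(z_B, T; z_A, 0) + S(z_D, 2T; z_B, T)], equals ΔS = (m_i/T)·(z_C − z_B)·[ z_B + z_C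 − z_A − z_D − g·(m_g/m_i)·T² ]. In particular ΔS does not depend on ĝ. -/
/-!
All four segments last `T`, so the `ĝ`-term, which depends on the duration alone, is the same
on both paths and cancels. The kinetic terms leave
`(m_i/2T)[(z_C−z_A)² + (z_D−z_C)² − (z_B−z_A)² − (z_D−z_B)²] = (m_i/T)(z_C−z_B)(z_B+z_C−z_A−z_D)`
and the potential terms leave `−m_g g T (z_C−z_B)`.
-/

theorem stmt_9_general (mi mg g gh T : ℝ) (hmi : 0 < mi)
    (hT : 0 < T)
    (S : ℝ → ℝ → ℝ → ℝ → ℝ)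
    (hS : ∀ zb tb za ta, S zb tb za ta =
      (mi / 2) * (zb - za) ^ 2 / (tb - ta)
        - (mg * g / 2) * (zb + za) * (tb - ta)
        + (gh / 24) * (tb - ta) ^ 3 * (mi * gh - 2 * mg * g)) :
    ∀ zA zB zC zD : ℝ,
      (S zC T zA 0 + S zD (2 * T) zC T) - (S zB T zA 0 + S zD (2 * T) zB T) =
        (mi / T) * (zC - zB) * (zB + zC - zA - zD - g * (mg / mi) * T ^ 2) := by
  intro zA zB zC zD
  have h2T : 2 * T - T = T := by ring
  simp only [hS, sub_zero, h2T]
  field_simp [hmi.ne', hT.ne']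
  ring

/-- the action difference along the two interferometer paths
`ΔS = [S(C;A) + S(D;C)] − [S(B;A) + S(D;B)]` equals
`(m_i/T)(z_C − z_B)[z_B + z_C − z_A − z_D − g(m_g/m_i)T²]`; in particular it
does not depend on `ĝ` (here `gh`). -/
theorem stmt_9 (mi mg g gh T : ℝ) (hmi : 0 < mi) (hmg : 0 < mg) (hg : 0 < g)
    (hT : 0 < T)
    (S : ℝ → ℝ → ℝ → ℝ → ℝ)
    (hS : ∀ zb tb za ta, S zb tb za ta =
      (mi / 2) * (zb - za) ^ 2 / (tb - ta)
        - (mg * g / 2) * (zb + za) * (tb - ta)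
        + (gh / 24) * (tb - ta) ^ 3 * (mi * gh - 2 * mg * g)) :
    ∀ zA zB zC zD : ℝ,
      (S zC T zA 0 + S zD (2 * T) zC T) - (S zB T zA 0 + S zD (2 * T) zB T) =
        (mi / T) * (zC - zB) * (zB + zC - zA - zD - g * (mg / mi) * T ^ 2) :=
  stmt_9_general mi mg g gh T hmi hT S hS
end

section
/- Let m_i, m_g, g, ℏ, κ > 0, ĝ ∈ ℝ, T > 0, and let z_A, z_B, z_C, z_D ∈ ℝ satisfy z_B + z_C − z_A − z_D = ĝT² and z_C − z_B = (ℏκ/m_i)T. Define the free-propagation phase difference Δφ_free := ΔS/ℏ where ΔS = (m_i/T)(z_C − z_B)[z_B + z_C − z_A − z_D − g(m_g/m_i)T²], and the laser-interaction phase difference Δφ_light := −κ·(z_B + z_C − z_A − z_D). Then Δφ_light = −κ ĝ T², and the total phase difference Δφ := Δφ_free + Δφ_light equals Δφ = −(m_g/m_i)·g·κ·T², independently of ĝ. -/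
/-! The momentum kick fixes the arm separation `z_C − z_B = (ℏκ/m_i)T`, so the free-propagation
phase is `κ(ĝ − (m_g/m_i)g)T²`; its `ĝ`-term is cancelled exactly by the laser phase `−κĝT²`. -/

lemma free_phase_eq {mi mg g hbar κ gh T zA zB zC zD : ℝ}
    (hmi : mi ≠ 0) (hhbar : hbar ≠ 0) (hT : T ≠ 0)
    (h1 : zB + zC - zA - zD = gh * T ^ 2) (h2 : zC - zB = (hbar * κ / mi) * T) :
    (mi / T) * (zC - zB) * (zB + zC - zA - zD - g * (mg / mi) * T ^ 2) / hbar =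
      κ * (gh - (mg / mi) * g) * T ^ 2 := by
  rw [h1, h2]
  field_simp

theorem stmt_11_general (mi mg g hbar κ : ℝ) (gh T : ℝ)
    (hmi : 0 < mi) (hhbar : 0 < hbar)
    (hT : 0 < T)
    (zA zB zC zD : ℝ)
    (h1 : zB + zC - zA - zD = gh * T ^ 2)
    (h2 : zC - zB = (hbar * κ / mi) * T)
    (Δφfree Δφlight : ℝ)
    (hfree : Δφfree =
      ((mi / T) * (zC - zB) * (zB + zC - zA - zD - g * (mg / mi) * T ^ 2)) / hbar)
    (hlight : Δφlight = -κ * (zB + zC - zA - zD)) :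
    Δφlight = -κ * gh * T ^ 2 ∧
    Δφfree + Δφlight = -(mg / mi) * g * κ * T ^ 2 := by
  have hlight' : Δφlight = -κ * gh * T ^ 2 := by rw [hlight, h1]; ring
  refine ⟨hlight', ?_⟩
  rw [hfree, free_phase_eq hmi.ne' hhbar.ne' hT.ne' h1 h2, hlight']
  ring

/-- the total interferometer phase difference.  Given
`z_B + z_C − z_A − z_D = ĝT²` and `z_C − z_B = (ℏκ/m_i)T`, the laser phase is
`Δφ_light = −κĝT²` and the total phase is
`Δφ = Δφ_free + Δφ_light = −(m_g/m_i)·g·κ·T²`, independently of `ĝ` (= `gh`). -/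
theorem stmt_11 (mi mg g hbar κ : ℝ) (gh T : ℝ)
    (hmi : 0 < mi) (hmg : 0 < mg) (hg : 0 < g) (hhbar : 0 < hbar)
    (hκ : 0 < κ) (hT : 0 < T)
    (zA zB zC zD : ℝ)
    (h1 : zB + zC - zA - zD = gh * T ^ 2)
    (h2 : zC - zB = (hbar * κ / mi) * T)
    (Δφfree Δφlight : ℝ)
    (hfree : Δφfree =
      ((mi / T) * (zC - zB) * (zB + zC - zA - zD - g * (mg / mi) * T ^ 2)) / hbar)
    (hlight : Δφlight = -κ * (zB + zC - zA - zD)) :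
    Δφlight = -κ * gh * T ^ 2 ∧
    Δφfree + Δφlight = -(mg / mi) * g * κ * T ^ 2 :=
  stmt_11_general mi mg g hbar κ gh T hmi hhbar hT zA zB zC zD h1 h2 Δφfree Δφlight hfree hlight
end

section
/- Let g, T > 0 and let m_{i1}, m_{i2}, m_{g1}, m_{g2} > 0 be the inertial and gravitational masses of an atom in its two internal states. Set ĝ₁ := (m_{g1}/m_{i1})·g, ĝ₂ := (m_{g2}/m_{i2})·g, and Δz_D := T²·( (m_{i2}/m_{i1})·ĝ₂ − (m_{i1}/m_{i2})·ĝ₁ ). Then Δz_D = (m_{i2} m_{g2} − m_{i1} m_{g1})·g·T²/(m_{i1} m_{i2}), and Δz_D = 0 if and only if m_{i2}·m_{g2} = m_{i1}·m_{g1}, i.e. if and only if the product (rather than the quotient) of inertial and gravitational mass is the same in the two internal states. -/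
theorem sq_mul_ratio_mul_sub_ratio_mul_eq {K : Type*} [Field K] {mi1 mi2 : K}
    (hmi1 : mi1 ≠ 0) (hmi2 : mi2 ≠ 0) (mg1 mg2 g T : K) :
    T ^ 2 * ((mi2 / mi1) * ((mg2 / mi2) * g) - (mi1 / mi2) * ((mg1 / mi1) * g)) =
      (mi2 * mg2 - mi1 * mg1) * g * T ^ 2 / (mi1 * mi2) := by
  field_simp

theorem stmt_18_general (g T mi1 mi2 mg1 mg2 : ℝ)
    (hg : 0 < g) (hT : 0 < T)
    (hmi1 : 0 < mi1) (hmi2 : 0 < mi2)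
    (gh1 gh2 ΔzD : ℝ)
    (hgh1 : gh1 = (mg1 / mi1) * g)
    (hgh2 : gh2 = (mg2 / mi2) * g)
    (hΔ : ΔzD = T ^ 2 * ((mi2 / mi1) * gh2 - (mi1 / mi2) * gh1)) :
    ΔzD = (mi2 * mg2 - mi1 * mg1) * g * T ^ 2 / (mi1 * mi2) ∧
    (ΔzD = 0 ↔ mi2 * mg2 = mi1 * mg1) := by
  have hformula : ΔzD = (mi2 * mg2 - mi1 * mg1) * g * T ^ 2 / (mi1 * mi2) := by
    rw [hΔ, hgh1, hgh2]
    exact sq_mul_ratio_mul_sub_ratio_mul_eq hmi1.ne' hmi2.ne' mg1 mg2 g T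
  refine ⟨hformula, ?_⟩
  simp [hformula, sub_eq_zero, hg.ne', hT.ne', hmi1.ne', hmi2.ne']

/-- with state-dependent free-fall accelerations
`ĝ₁ = (m_{g1}/m_{i1})g`, `ĝ₂ = (m_{g2}/m_{i2})g` and
`Δz_D = T²((m_{i2}/m_{i1})ĝ₂ − (m_{i1}/m_{i2})ĝ₁)`, one has
`Δz_D = (m_{i2}m_{g2} − m_{i1}m_{g1})gT²/(m_{i1}m_{i2})`, and `Δz_D = 0` iff
the product of inertial and gravitational mass agrees in the two states. -/
theorem stmt_18 (g T mi1 mi2 mg1 mg2 : ℝ)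
    (hg : 0 < g) (hT : 0 < T)
    (hmi1 : 0 < mi1) (hmi2 : 0 < mi2) (hmg1 : 0 < mg1) (hmg2 : 0 < mg2)
    (gh1 gh2 ΔzD : ℝ)
    (hgh1 : gh1 = (mg1 / mi1) * g)
    (hgh2 : gh2 = (mg2 / mi2) * g)
    (hΔ : ΔzD = T ^ 2 * ((mi2 / mi1) * gh2 - (mi1 / mi2) * gh1)) :
    ΔzD = (mi2 * mg2 - mi1 * mg1) * g * T ^ 2 / (mi1 * mi2) ∧
    (ΔzD = 0 ↔ mi2 * mg2 = mi1 * mg1) :=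
  stmt_18_general g T mi1 mi2 mg1 mg2 hg hT hmi1 hmi2 gh1 gh2 ΔzD hgh1 hgh2 hΔ
end
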